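/- Let γ ∈ (0,1] and K ∈ S_γ, and write J = J_γ(K). Then √γ·ρ(A − BKC) ≤ √(1 − ℓ₀/J), and for every t ∈ ℕ with t > 0, ‖(√γ(A − BKC))^t‖ ≤ √(J/ℓ₀)·(1 − ℓ₀/J)^{t/2}. -/

import Mathlib

/-!
Write `M = √γ (A − BKC)` and `X = Q + CᵀKᵀRKC ⪰ ℓ₀ I`. Then `P_K(γ) = ∑ₜ (Mᵗ)ᵀ X Mᵗ`, which
converges by Gelfand's formula because `ρ(M) < 1`. It solves `P = X + Mᵀ P M`, and
`ℓ₀ I ⪯ X ⪯ P ⪯ (tr P) I = J I`, so `Mᵀ P M = P − X ⪯ P − ℓ₀ I ⪯ (1 − ℓ₀ / J) P`. Iterating gives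
`ℓ₀ (Mᵗ)ᵀ Mᵗ ⪯ (Mᵗ)ᵀ P Mᵗ ⪯ (1 − ℓ₀ / J)ᵗ J I`, the norm bound, and evaluating the one-step
inequality at a complex eigenvector `v` of `M` gives `|μ|² v* P v ≤ (1 − ℓ₀ / J) v* P v`, hence
`|μ|² ≤ 1 − ℓ₀ / J`.
-/

open Matrix

noncomputable section

/-- Spectral radius of a real square matrix: the largest modulus of a complex eigenvalue. -/
def specRad {n : ℕ} (M : Matrix (Fin n) (Fin n) ℝ) : ℝ :=
  sSup {r : ℝ | ∃ μ ∈ spectrum ℂ (M.map (algebraMap ℝ ℂ)), r = ‖μ‖}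

/-- Spectral (ℓ²→ℓ² operator) norm of a real matrix. -/
def spNorm {a b : ℕ} (M : Matrix (Fin a) (Fin b) ℝ) : ℝ :=
  ‖LinearMap.toContinuousLinearMap (Matrix.toEuclideanLin M)‖

/-- Frobenius norm of a real matrix. -/
def frobNorm {a b : ℕ} (M : Matrix (Fin a) (Fin b) ℝ) : ℝ :=
  Real.sqrt (∑ i, ∑ j, (M i j) ^ 2)

/-- Euclidean norm of a vector. -/
def vecNorm {a : ℕ} (x : Fin a → ℝ) : ℝ :=
  Real.sqrt (∑ i, (x i) ^ 2)

variable {n m p : ℕ}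

/-- Closed-loop matrix `A - BKC`. -/
def Acl (A : Matrix (Fin n) (Fin n) ℝ) (B : Matrix (Fin n) (Fin m) ℝ)
    (C : Matrix (Fin p) (Fin n) ℝ) (K : Matrix (Fin m) (Fin p) ℝ) : Matrix (Fin n) (Fin n) ℝ :=
  A - B * K * C

/-- Membership in the stabilizing set `S_γ`: `√γ · ρ(A − BKC) < 1`. -/
def inS (A : Matrix (Fin n) (Fin n) ℝ) (B : Matrix (Fin n) (Fin m) ℝ)
    (C : Matrix (Fin p) (Fin n) ℝ) (γ : ℝ) (K : Matrix (Fin m) (Fin p) ℝ) : Prop :=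
  Real.sqrt γ * specRad (Acl A B C K) < 1

/-- The solution `P_K(γ) = Σ_{t} γ^t ((A−BKC)ᵀ)^t (Q + CᵀKᵀRKC) (A−BKC)^t` of the
discounted Lyapunov equation. -/
def Pmat (A : Matrix (Fin n) (Fin n) ℝ) (B : Matrix (Fin n) (Fin m) ℝ)
    (C : Matrix (Fin p) (Fin n) ℝ) (Q : Matrix (Fin n) (Fin n) ℝ) (R : Matrix (Fin m) (Fin m) ℝ)
    (γ : ℝ) (K : Matrix (Fin m) (Fin p) ℝ) : Matrix (Fin n) (Fin n) ℝ :=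
  ∑' t : ℕ, γ ^ t • ((Acl A B C K)ᵀ ^ t * (Q + Cᵀ * Kᵀ * R * K * C) * (Acl A B C K) ^ t)

/-- The Gramian `Σ_K(γ) = Σ_{t} γ^t (A−BKC)^t ((A−BKC)ᵀ)^t`. -/
def Smat (A : Matrix (Fin n) (Fin n) ℝ) (B : Matrix (Fin n) (Fin m) ℝ)
    (C : Matrix (Fin p) (Fin n) ℝ) (γ : ℝ) (K : Matrix (Fin m) (Fin p) ℝ) :
    Matrix (Fin n) (Fin n) ℝ :=
  ∑' t : ℕ, γ ^ t • ((Acl A B C K) ^ t * ((Acl A B C K)ᵀ) ^ t)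

/-- The discounted cost `J_γ(K) = Tr(P_K(γ))`. -/
def Jcost (A : Matrix (Fin n) (Fin n) ℝ) (B : Matrix (Fin n) (Fin m) ℝ)
    (C : Matrix (Fin p) (Fin n) ℝ) (Q : Matrix (Fin n) (Fin n) ℝ) (R : Matrix (Fin m) (Fin m) ℝ)
    (γ : ℝ) (K : Matrix (Fin m) (Fin p) ℝ) : ℝ :=
  (Pmat A B C Q R γ K).trace

/-- `E_K = (R + γBᵀP_K(γ)B)KC − γBᵀP_K(γ)A`. -/
def Egrad (A : Matrix (Fin n) (Fin n) ℝ) (B : Matrix (Fin n) (Fin m) ℝ)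
    (C : Matrix (Fin p) (Fin n) ℝ) (Q : Matrix (Fin n) (Fin n) ℝ) (R : Matrix (Fin m) (Fin m) ℝ)
    (γ : ℝ) (K : Matrix (Fin m) (Fin p) ℝ) : Matrix (Fin m) (Fin n) ℝ :=
  (R + γ • (Bᵀ * Pmat A B C Q R γ K * B)) * K * C - γ • (Bᵀ * Pmat A B C Q R γ K * A)

/-- The closed-form gradient `∇J_γ(K) = 2 E_K Σ_K(γ) Cᵀ`. -/
def gradJ (A : Matrix (Fin n) (Fin n) ℝ) (B : Matrix (Fin n) (Fin m) ℝ)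
    (C : Matrix (Fin p) (Fin n) ℝ) (Q : Matrix (Fin n) (Fin n) ℝ) (R : Matrix (Fin m) (Fin m) ℝ)
    (γ : ℝ) (K : Matrix (Fin m) (Fin p) ℝ) : Matrix (Fin m) (Fin p) ℝ :=
  (2 : ℝ) • (Egrad A B C Q R γ K * Smat A B C γ K * Cᵀ)

end

open Filter
open scoped MatrixOrder ComplexOrder Pointwise

namespace Matrix

variable {ι : Type*}

theorem posSemidef_of_smul_one_le [DecidableEq ι] {P : Matrix ι ι ℝ} {ℓ₀ : ℝ} (hℓ₀ : 0 ≤ ℓ₀)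
    (h : ℓ₀ • 1 ≤ P) : P.PosSemidef :=
  ((PosSemidef.one.smul hℓ₀).nonneg.trans h).posSemidef

theorem posDef_of_smul_one_le [DecidableEq ι] {P : Matrix ι ι ℝ} {ℓ₀ : ℝ} (hℓ₀ : 0 < ℓ₀)
    (h : ℓ₀ • 1 ≤ P) : P.PosDef := by
  simpa using PosDef.posSemidef_add (le_iff.mp h) (PosDef.one.smul hℓ₀)

variable [Fintype ι]

theorem PosSemidef.tsum {κ : Type*} {f : κ → Matrix ι ι ℝ} (hf : Summable f)
    (h : ∀ k, (f k).PosSemidef) : (∑' k, f k).PosSemidef := by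
  refine .of_dotProduct_mulVec_nonneg ?_ fun x => ?_
  · rw [IsHermitian, conjTranspose_tsum]
    exact tsum_congr fun k => (h k).1
  · let q : Matrix ι ι ℝ →+ ℝ :=
      AddMonoidHom.mk' (fun M => star x ⬝ᵥ M *ᵥ x) fun M N => by
        simp only [add_mulVec, dotProduct_add]
    have hq : Continuous q := by
      simp only [q, AddMonoidHom.mk'_apply]
      fun_prop
    exact (hf.hasSum.map q hq).nonneg fun k => (h k).dotProduct_mulVec_nonneg x

theorem transpose_mul_mul_le_transpose_mul_mul {A B : Matrix ι ι ℝ} (h : A ≤ B)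
    (M : Matrix ι ι ℝ) : Mᵀ * A * M ≤ Mᵀ * B * M := by
  simpa [star_eq_conjTranspose, conjTranspose_eq_transpose_of_trivial] using
    star_left_conjugate_le_conjugate h M

variable [DecidableEq ι]

theorem vecMulVec_self_le_trace_smul_one (v : ι → ℝ) :
    vecMulVec v v ≤ (vecMulVec v v).trace • 1 := by
  refine .of_dotProduct_mulVec_nonneg ?_ fun x => ?_
  · exact (isHermitian_one.smul (IsSelfAdjoint.all _)).sub
      (by simpa using (posSemidef_vecMulVec_self_star v).1)
  · have hcs := Finset.sum_mul_sq_le_sq_mul_sq Finset.univ v x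
    simp only [star_trivial, sub_mulVec, smul_mulVec, one_mulVec, vecMulVec_mulVec,
      dotProduct_sub, dotProduct_smul, trace_vecMulVec]
    simp only [dotProduct]
    simpa only [mul_comm (x _), ← sq, MulOpposite.smul_eq_mul_unop, MulOpposite.unop_op,
      smul_eq_mul, sub_nonneg] using hcs

theorem PosSemidef.le_trace_smul_one {P : Matrix ι ι ℝ} (hP : P.PosSemidef) :
    P ≤ P.trace • 1 := by
  obtain ⟨m, v, rfl⟩ := posSemidef_iff_eq_sum_vecMulVec.mp hP
  simp only [star_trivial, trace_sum, Finset.sum_smul]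
  exact Finset.sum_le_sum fun k _ => vecMulVec_self_le_trace_smul_one (v k)

theorem le_trace_of_smul_one_le [Nonempty ι] {P : Matrix ι ι ℝ} {ℓ₀ : ℝ} (hℓ₀ : 0 ≤ ℓ₀)
    (h : ℓ₀ • 1 ≤ P) : ℓ₀ ≤ P.trace := by
  have htr := (le_iff.mp h).trace_nonneg
  rw [trace_sub, trace_smul, trace_one, smul_eq_mul, sub_nonneg] at htr
  exact le_trans (le_mul_of_one_le_right hℓ₀ (by exact_mod_cast Fintype.card_pos)) htr

theorem transpose_pow_mul_mul_pow_le {M P : Matrix ι ι ℝ} {s : ℝ} (hs : 0 ≤ s)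
    (h : Mᵀ * P * M ≤ s • P) (t : ℕ) : (M ^ t)ᵀ * P * M ^ t ≤ s ^ t • P := by
  induction t with
  | zero => simp
  | succ t ih =>
    calc (M ^ (t + 1))ᵀ * P * M ^ (t + 1) = Mᵀ * ((M ^ t)ᵀ * P * M ^ t) * M := by
          simp only [pow_succ, transpose_mul, Matrix.mul_assoc]
      _ ≤ Mᵀ * (s ^ t • P) * M := transpose_mul_mul_le_transpose_mul_mul ih M
      _ = s ^ t • (Mᵀ * P * M) := by simp
      _ ≤ s ^ t • (s • P) := smul_le_smul_of_nonneg_left h (pow_nonneg hs t)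
      _ = s ^ (t + 1) • P := by rw [smul_smul, pow_succ]

theorem transpose_mul_mul_le_smul_of_eq_add {M X P : Matrix ι ι ℝ} {ℓ₀ J : ℝ}
    (hℓ₀ : 0 ≤ ℓ₀) (hJ : 0 < J) (hP : P = X + Mᵀ * P * M) (hX : ℓ₀ • 1 ≤ X)
    (hPJ : P ≤ J • 1) : Mᵀ * P * M ≤ (1 - ℓ₀ / J) • P := by
  have hscaled : (ℓ₀ / J) • P ≤ ℓ₀ • 1 := by
    simpa [smul_smul, div_mul_cancel₀ ℓ₀ hJ.ne'] using
      smul_le_smul_of_nonneg_left hPJ (div_nonneg hℓ₀ hJ.le)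
  calc Mᵀ * P * M = P - X := eq_sub_of_add_eq' hP.symm
    _ ≤ P - ℓ₀ • 1 := sub_le_sub_left hX P
    _ ≤ P - (ℓ₀ / J) • P := sub_le_sub_left hscaled P
    _ = (1 - ℓ₀ / J) • P := by rw [sub_smul, one_smul]

theorem PosSemidef.map_ofReal {P : Matrix ι ι ℝ} (hP : P.PosSemidef) :
    (P.map (algebraMap ℝ ℂ)).PosSemidef := by
  obtain ⟨S, rfl⟩ := CStarAlgebra.nonneg_iff_eq_star_mul_self.mp hP.nonneg
  rw [star_eq_conjTranspose, Matrix.map_mul,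
    conjTranspose_map (algebraMap ℝ ℂ) fun x => (Complex.conj_ofReal x).symm]
  exact posSemidef_conjTranspose_mul_self _

theorem PosDef.map_ofReal {P : Matrix ι ι ℝ} (hP : P.PosDef) :
    (P.map (algebraMap ℝ ℂ)).PosDef :=
  hP.posSemidef.map_ofReal.posDef_iff_isUnit.mpr (hP.isUnit.map (algebraMap ℝ ℂ).mapMatrix)

theorem exists_mulVec_eq_smul_of_mem_spectrum {M : Matrix ι ι ℂ} {μ : ℂ}
    (hμ : μ ∈ spectrum ℂ M) : ∃ v ≠ 0, M *ᵥ v = μ • v := by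
  rw [← spectrum_toLin', ← Module.End.hasEigenvalue_iff_mem_spectrum] at hμ
  obtain ⟨v, hv⟩ := hμ.exists_hasEigenvector
  exact ⟨v, hv.2, hv.apply_eq_smul⟩

theorem norm_sq_le_of_transpose_mul_mul_le {M P : Matrix ι ι ℝ} {s : ℝ} (hP : P.PosDef)
    (h : Mᵀ * P * M ≤ s • P) {μ : ℂ} (hμ : μ ∈ spectrum ℂ (M.map (algebraMap ℝ ℂ))) :
    ‖μ‖ ^ 2 ≤ s := by
  -- evaluate the complexified inequality at an eigenvector `v`: it reads `‖μ‖² q ≤ s q`, `q > 0`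
  set Mc := M.map (algebraMap ℝ ℂ)
  set Pc := P.map (algebraMap ℝ ℂ)
  obtain ⟨v, hv0, hv⟩ := exists_mulVec_eq_smul_of_mem_spectrum hμ
  have hq := (le_iff.mp h).map_ofReal.dotProduct_mulVec_nonneg v
  have hpos : 0 < star v ⬝ᵥ Pc *ᵥ v := hP.map_ofReal.dotProduct_mulVec_pos hv0
  set q := star v ⬝ᵥ Pc *ᵥ v
  have hquad : star v ⬝ᵥ (s • P - Mᵀ * P * M).map (algebraMap ℝ ℂ) *ᵥ v =
      ((s - ‖μ‖ ^ 2 : ℝ) : ℂ) * q := by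
    have hmap : (s • P - Mᵀ * P * M).map (algebraMap ℝ ℂ) = (s : ℂ) • Pc - Mcᴴ * Pc * Mc := by
      ext i j
      simp [Mc, Pc, Matrix.mul_apply]
    have hconj : star v ⬝ᵥ (Mcᴴ * Pc * Mc) *ᵥ v = star (Mc *ᵥ v) ⬝ᵥ Pc *ᵥ (Mc *ᵥ v) := by
      simp only [star_mulVec, dotProduct_mulVec, vecMul_vecMul, ← mulVec_mulVec,
        Matrix.mul_assoc]
    rw [hmap, sub_mulVec, dotProduct_sub, hconj, hv, smul_mulVec, dotProduct_smul, star_smul,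
      mulVec_smul, dotProduct_smul, smul_dotProduct]
    simp only [smul_eq_mul, Complex.star_def, q]
    rw [← mul_assoc, Complex.mul_conj']
    push_cast
    ring
  obtain ⟨hre, him⟩ := Complex.pos_iff.mp hpos
  have hq_real : q = (q.re : ℂ) := Complex.ext rfl (by simp [him])
  rw [hquad, hq_real, ← Complex.ofReal_mul, Complex.zero_le_real] at hq
  exact sub_nonneg.mp ((mul_nonneg_iff_of_pos_right hre).mp hq)

section Lyapunov

/-- Solves `P = X + Mᵀ P M` when the series converges (`lyapunovSum_eq`); it is `0` otherwise. -/
noncomputable def lyapunovSum (M X : Matrix ι ι ℝ) : Matrix ι ι ℝ :=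
  ∑' t : ℕ, (M ^ t)ᵀ * X * M ^ t

variable {M X : Matrix ι ι ℝ} {ℓ₀ : ℝ}

theorem lyapunovSum_sqrt_smul {c : ℝ} (hc : 0 ≤ c) (M X : Matrix ι ι ℝ) :
    lyapunovSum (√c • M) X = ∑' t : ℕ, c ^ t • (Mᵀ ^ t * X * M ^ t) := by
  refine tsum_congr fun t => ?_
  simp only [smul_pow, transpose_smul, Matrix.smul_mul, Matrix.mul_smul, smul_smul, ← mul_pow,
    Real.mul_self_sqrt hc, transpose_pow]

theorem lyapunovSum_eq (hs : Summable fun t : ℕ => (M ^ t)ᵀ * X * M ^ t) :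
    lyapunovSum M X = X + Mᵀ * lyapunovSum M X * M := by
  have hshift (t : ℕ) :
      (M ^ (t + 1))ᵀ * X * M ^ (t + 1) = Mᵀ * ((M ^ t)ᵀ * X * M ^ t) * M := by
    simp only [pow_succ, transpose_mul, Matrix.mul_assoc]
  calc lyapunovSum M X = X + ∑' t : ℕ, Mᵀ * ((M ^ t)ᵀ * X * M ^ t) * M := by
        rw [lyapunovSum, hs.tsum_eq_zero_add, tsum_congr hshift, pow_zero, transpose_one,
          Matrix.one_mul, Matrix.mul_one]
    _ = X + Mᵀ * lyapunovSum M X * M := by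
        rw [(hs.mul_left _).tsum_mul_right, hs.tsum_mul_left, lyapunovSum]

theorem posSemidef_lyapunovSum (hs : Summable fun t : ℕ => (M ^ t)ᵀ * X * M ^ t)
    (hX : X.PosSemidef) : (lyapunovSum M X).PosSemidef :=
  PosSemidef.tsum hs fun t => by
    simpa [conjTranspose_eq_transpose_of_trivial] using hX.conjTranspose_mul_mul_same (M ^ t)

theorem le_lyapunovSum (hs : Summable fun t : ℕ => (M ^ t)ᵀ * X * M ^ t) (hX : X.PosSemidef) :
    X ≤ lyapunovSum M X := by
  have hrest : 0 ≤ Mᵀ * lyapunovSum M X * M := by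
    simpa [conjTranspose_eq_transpose_of_trivial] using
      ((posSemidef_lyapunovSum hs hX).conjTranspose_mul_mul_same M).nonneg
  rw [lyapunovSum_eq hs]
  exact le_add_of_nonneg_right hrest

theorem smul_one_le_lyapunovSum (hℓ₀ : 0 ≤ ℓ₀) (hX : ℓ₀ • 1 ≤ X)
    (hs : Summable fun t : ℕ => (M ^ t)ᵀ * X * M ^ t) : ℓ₀ • 1 ≤ lyapunovSum M X :=
  hX.trans (le_lyapunovSum hs (posSemidef_of_smul_one_le hℓ₀ hX))

theorem transpose_mul_lyapunovSum_mul_le [Nonempty ι] (hℓ₀ : 0 < ℓ₀) (hX : ℓ₀ • 1 ≤ X)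
    (hs : Summable fun t : ℕ => (M ^ t)ᵀ * X * M ^ t) :
    Mᵀ * lyapunovSum M X * M ≤ (1 - ℓ₀ / (lyapunovSum M X).trace) • lyapunovSum M X := by
  have hP := smul_one_le_lyapunovSum hℓ₀.le hX hs
  exact transpose_mul_mul_le_smul_of_eq_add hℓ₀.le
    (hℓ₀.trans_le (le_trace_of_smul_one_le hℓ₀.le hP)) (lyapunovSum_eq hs) hX
    (posSemidef_of_smul_one_le hℓ₀.le hP).le_trace_smul_one

end Lyapunov

end Matrix

theorem spectrum.eventually_norm_pow_le {A : Type*} [NormedRing A] [NormedAlgebra ℂ A]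
    [CompleteSpace A] (a : A) {c : ℝ} (h : spectralRadius ℂ a < ENNReal.ofReal c) :
    ∀ᶠ t : ℕ in atTop, ‖a ^ t‖ ≤ c ^ t := by
  filter_upwards [(pow_norm_pow_one_div_tendsto_nhds_spectralRadius a).eventually_lt_const h,
    eventually_ne_atTop 0] with t ht ht0
  have hroot := (ENNReal.ofReal_lt_ofReal_iff_of_nonneg (by positivity)).mp ht
  calc ‖a ^ t‖ = (‖a ^ t‖ ^ (1 / t : ℝ)) ^ t := by
        rw [one_div, Real.rpow_inv_natCast_pow (norm_nonneg _) ht0]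
    _ ≤ c ^ t := pow_le_pow_left₀ (by positivity) hroot.le t

section SpectralRadius

variable {n : ℕ}

theorem specRad_nonneg (M : Matrix (Fin n) (Fin n) ℝ) : 0 ≤ specRad M :=
  Real.sSup_nonneg fun _ ⟨μ, _, hr⟩ => hr ▸ norm_nonneg μ

theorem norm_le_specRad {M : Matrix (Fin n) (Fin n) ℝ} {μ : ℂ}
    (hμ : μ ∈ spectrum ℂ (M.map (algebraMap ℝ ℂ))) : ‖μ‖ ≤ specRad M := by
  refine le_csSup (BddAbove.mono ?_
    ((Matrix.finite_spectrum (M.map (algebraMap ℝ ℂ))).image (‖·‖ : ℂ → ℝ)).bddAbove)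
    ⟨μ, hμ, rfl⟩
  rintro _ ⟨ν, hν, rfl⟩
  exact ⟨ν, hν, rfl⟩

theorem specRad_le {M : Matrix (Fin n) (Fin n) ℝ} {b : ℝ} (hb : 0 ≤ b)
    (h : ∀ μ ∈ spectrum ℂ (M.map (algebraMap ℝ ℂ)), ‖μ‖ ≤ b) : specRad M ≤ b :=
  Real.sSup_le (fun _ ⟨μ, hμ, hr⟩ => hr ▸ h μ hμ) hb

theorem spectralRadius_le_ofReal_specRad (M : Matrix (Fin n) (Fin n) ℝ) :
    spectralRadius ℂ (M.map (algebraMap ℝ ℂ)) ≤ ENNReal.ofReal (specRad M) :=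
  iSup₂_le fun μ hμ => by
    rw [← ENNReal.ofReal_coe_nnreal, coe_nnnorm]
    exact ENNReal.ofReal_le_ofReal (norm_le_specRad hμ)

theorem specRad_smul {c : ℝ} (hc : 0 < c) (M : Matrix (Fin n) (Fin n) ℝ) :
    specRad (c • M) = c * specRad M := by
  let u : ℂˣ := Units.mk0 c (by exact_mod_cast hc.ne')
  have hmap : (c • M).map (algebraMap ℝ ℂ) = u • M.map (algebraMap ℝ ℂ) := by
    ext i j
    simp [u]
  have hset : {r : ℝ | ∃ μ ∈ u • spectrum ℂ (M.map (algebraMap ℝ ℂ)), r = ‖μ‖} =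
      c • {r : ℝ | ∃ μ ∈ spectrum ℂ (M.map (algebraMap ℝ ℂ)), r = ‖μ‖} := by
    ext r
    simp [Set.mem_smul_set, u, abs_of_pos hc, eq_comm]
  unfold specRad
  rw [hmap, spectrum.unit_smul_eq_smul, hset, Real.sSup_smul_of_nonneg hc.le, smul_eq_mul]

section Frobenius

-- Gelfand's formula holds for any Banach-algebra norm; the Frobenius norm is also invariant under
-- transposition and under `ℝ → ℂ`.
attribute [local instance] Matrix.frobeniusNormedRing Matrix.frobeniusNormedAlgebra

theorem summable_transpose_pow_mul_mul_pow {M : Matrix (Fin n) (Fin n) ℝ}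
    (hM : specRad M < 1) (X : Matrix (Fin n) (Fin n) ℝ) :
    Summable fun t : ℕ => (M ^ t)ᵀ * X * M ^ t := by
  obtain ⟨c, hMc, hc1⟩ := exists_between hM
  have hc0 : 0 < c := (specRad_nonneg M).trans_lt hMc
  have hpow := spectrum.eventually_norm_pow_le (M.map (algebraMap ℝ ℂ))
    ((spectralRadius_le_ofReal_specRad M).trans_lt ((ENNReal.ofReal_lt_ofReal_iff hc0).mpr hMc))
  refine Summable.of_norm_bounded_eventually_nat
    ((summable_geometric_of_lt_one (sq_nonneg c) (by nlinarith)).mul_left ‖X‖) ?_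
  filter_upwards [hpow] with t ht
  have hnorm : ‖M ^ t‖ = ‖(M.map (algebraMap ℝ ℂ)) ^ t‖ := by
    rw [← Matrix.map_pow, Matrix.frobenius_norm_map_eq _ _ fun x => by simp]
  calc ‖(M ^ t)ᵀ * X * M ^ t‖ ≤ ‖(M ^ t)ᵀ‖ * ‖X‖ * ‖M ^ t‖ := norm_mul₃_le
    _ = ‖X‖ * ‖M ^ t‖ ^ 2 := by rw [Matrix.frobenius_norm_transpose]; ring
    _ ≤ ‖X‖ * (c ^ 2) ^ t := by
        rw [← pow_mul, mul_comm 2, pow_mul, hnorm]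
        gcongr

end Frobenius

end SpectralRadius

theorem spNorm_le_sqrt_of_transpose_mul_self_le {a b : ℕ} {M : Matrix (Fin a) (Fin b) ℝ} {c : ℝ}
    (h : Mᵀ * M ≤ c • 1) : spNorm M ≤ √c := by
  refine ContinuousLinearMap.opNorm_le_bound _ (Real.sqrt_nonneg c) fun v => ?_
  have hq := h.dotProduct_mulVec_nonneg (WithLp.ofLp v)
  change ‖WithLp.toLp 2 (M *ᵥ WithLp.ofLp v)‖ ≤ √c * ‖v‖
  rw [← Real.sqrt_sq (norm_nonneg (WithLp.toLp 2 _)), ← Real.sqrt_sq (norm_nonneg v),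
    ← Real.sqrt_mul' _ (sq_nonneg _)]
  refine Real.sqrt_le_sqrt ?_
  rw [← real_inner_self_eq_norm_sq, ← real_inner_self_eq_norm_sq,
    EuclideanSpace.inner_eq_star_dotProduct, EuclideanSpace.inner_eq_star_dotProduct]
  simp only [star_trivial, sub_mulVec, smul_mulVec, one_mulVec, dotProduct_sub, dotProduct_smul,
    ← mulVec_mulVec, dotProduct_mulVec _ Mᵀ, vecMul_transpose, smul_eq_mul, sub_nonneg] at hq
  simpa only [WithLp.ofLp_toLp, star_trivial] using hq

section Decay

variable {n : ℕ} [Nonempty (Fin n)] {M X : Matrix (Fin n) (Fin n) ℝ} {ℓ₀ : ℝ}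

theorem specRad_le_of_lyapunovSum (hℓ₀ : 0 < ℓ₀) (hX : ℓ₀ • 1 ≤ X)
    (hs : Summable fun t : ℕ => (M ^ t)ᵀ * X * M ^ t) :
    specRad M ≤ √(1 - ℓ₀ / (lyapunovSum M X).trace) := by
  refine specRad_le (Real.sqrt_nonneg _) fun μ hμ => Real.le_sqrt_of_sq_le ?_
  exact norm_sq_le_of_transpose_mul_mul_le
    (posDef_of_smul_one_le hℓ₀ (smul_one_le_lyapunovSum hℓ₀.le hX hs))
    (transpose_mul_lyapunovSum_mul_le hℓ₀ hX hs) hμ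

theorem spNorm_pow_le_of_lyapunovSum (hℓ₀ : 0 < ℓ₀) (hX : ℓ₀ • 1 ≤ X)
    (hs : Summable fun t : ℕ => (M ^ t)ᵀ * X * M ^ t) (t : ℕ) :
    spNorm (M ^ t) ≤ √((lyapunovSum M X).trace / ℓ₀) *
      √(1 - ℓ₀ / (lyapunovSum M X).trace) ^ t := by
  have hP := smul_one_le_lyapunovSum hℓ₀.le hX hs
  set P := lyapunovSum M X
  set J := P.trace
  have hJ : ℓ₀ ≤ J := le_trace_of_smul_one_le hℓ₀.le hP
  have hr : 0 ≤ 1 - ℓ₀ / J := sub_nonneg.mpr ((div_le_one (hℓ₀.trans_le hJ)).mpr hJ)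
  have hbound : ℓ₀ • ((M ^ t)ᵀ * M ^ t) ≤ ℓ₀ • ((J / ℓ₀ * (1 - ℓ₀ / J) ^ t) • 1) :=
    calc ℓ₀ • ((M ^ t)ᵀ * M ^ t) = (M ^ t)ᵀ * (ℓ₀ • 1) * M ^ t := by simp
      _ ≤ (M ^ t)ᵀ * P * M ^ t := transpose_mul_mul_le_transpose_mul_mul hP _
      _ ≤ (1 - ℓ₀ / J) ^ t • P := transpose_pow_mul_mul_pow_le hr
          (transpose_mul_lyapunovSum_mul_le hℓ₀ hX hs) t
      _ ≤ (1 - ℓ₀ / J) ^ t • (J • 1) := smul_le_smul_of_nonneg_left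
          (posSemidef_of_smul_one_le hℓ₀.le hP).le_trace_smul_one (pow_nonneg hr t)
      _ = ℓ₀ • ((J / ℓ₀ * (1 - ℓ₀ / J) ^ t) • 1) := by
          rw [smul_smul, smul_smul]
          field_simp
  calc spNorm (M ^ t) ≤ √(J / ℓ₀ * (1 - ℓ₀ / J) ^ t) :=
        spNorm_le_sqrt_of_transpose_mul_self_le ((smul_le_smul_iff_of_pos_left hℓ₀).mp hbound)
    _ = √(J / ℓ₀) * √(1 - ℓ₀ / J) ^ t := by
        rw [Real.sqrt_mul (div_nonneg (hℓ₀.le.trans hJ) hℓ₀.le), ← Real.sqrt_sq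
          (pow_nonneg (Real.sqrt_nonneg _) t), ← pow_mul, mul_comm t, pow_mul, Real.sq_sqrt hr]

end Decay

theorem stmt11_general
    {n m p : ℕ} (hn : 1 ≤ n)
    (A : Matrix (Fin n) (Fin n) ℝ) (B : Matrix (Fin n) (Fin m) ℝ) (C : Matrix (Fin p) (Fin n) ℝ)
    (Q : Matrix (Fin n) (Fin n) ℝ) (R : Matrix (Fin m) (Fin m) ℝ)
    (ℓ₀ : ℝ) (hℓ₀ : 0 < ℓ₀)
    (hQlb : (Q - ℓ₀ • (1 : Matrix (Fin n) (Fin n) ℝ)).PosSemidef)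
    (hRlb : (R - ℓ₀ • (1 : Matrix (Fin m) (Fin m) ℝ)).PosSemidef)
    (γ : ℝ) (hγ : γ ∈ Set.Ioc (0 : ℝ) 1)
    (K : Matrix (Fin m) (Fin p) ℝ) (hK : inS A B C γ K) :
    Real.sqrt γ * specRad (Acl A B C K) ≤
        Real.sqrt (1 - ℓ₀ / Jcost A B C Q R γ K) ∧
      ∀ t : ℕ, 0 < t →
        spNorm ((Real.sqrt γ • Acl A B C K) ^ t) ≤
          Real.sqrt (Jcost A B C Q R γ K / ℓ₀) *
            Real.sqrt (1 - ℓ₀ / Jcost A B C Q R γ K) ^ t := by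
  have : Nonempty (Fin n) := ⟨⟨0, hn⟩⟩
  have hsqrtγ : 0 < √γ := Real.sqrt_pos.mpr hγ.1
  set L := Acl A B C K
  set X := Q + Cᵀ * Kᵀ * R * K * C
  have hR : R.PosSemidef := by
    simpa using hRlb.add (PosSemidef.one.smul hℓ₀.le)
  have hX : ℓ₀ • 1 ≤ X := le_add_of_le_of_nonneg hQlb <| by
    simpa [conjTranspose_eq_transpose_of_trivial, Matrix.mul_assoc] using
      (hR.conjTranspose_mul_mul_same (K * C)).nonneg
  have hJ : Jcost A B C Q R γ K = (lyapunovSum (√γ • L) X).trace := by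
    rw [Jcost, Pmat, lyapunovSum_sqrt_smul hγ.1.le]
  have hs := summable_transpose_pow_mul_mul_pow (by rwa [specRad_smul hsqrtγ]) X
  rw [hJ, ← specRad_smul hsqrtγ]
  exact ⟨specRad_le_of_lyapunovSum hℓ₀ hX hs, fun t _ => spNorm_pow_le_of_lyapunovSum hℓ₀ hX hs t⟩

/-- `√γ·ρ(A−BKC) ≤ √(1 − ℓ₀/J)` and
`‖(√γ(A−BKC))^t‖ ≤ √(J/ℓ₀)·(1 − ℓ₀/J)^{t/2}` for all `t > 0`, where `J = J_γ(K)`. -/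
theorem stmt11
    {n m p : ℕ} (hn : 1 ≤ n) (hm : 1 ≤ m) (hp : 1 ≤ p)
    (A : Matrix (Fin n) (Fin n) ℝ) (B : Matrix (Fin n) (Fin m) ℝ) (C : Matrix (Fin p) (Fin n) ℝ)
    (Q : Matrix (Fin n) (Fin n) ℝ) (R : Matrix (Fin m) (Fin m) ℝ)
    (hQsymm : Q.IsSymm) (hRsymm : R.IsSymm)
    (ℓ₀ ℓ₁ ψ φ : ℝ) (hℓ₀ : 0 < ℓ₀) (hℓ₀₁ : ℓ₀ ≤ ℓ₁) (hψ : 1 ≤ ψ) (hφ : 1 ≤ φ)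
    (hQlb : (Q - ℓ₀ • (1 : Matrix (Fin n) (Fin n) ℝ)).PosSemidef)
    (hQub : (ℓ₁ • (1 : Matrix (Fin n) (Fin n) ℝ) - Q).PosSemidef)
    (hRlb : (R - ℓ₀ • (1 : Matrix (Fin m) (Fin m) ℝ)).PosSemidef)
    (hRub : (ℓ₁ • (1 : Matrix (Fin m) (Fin m) ℝ) - R).PosSemidef)
    (hB : spNorm B ≤ ψ) (hC : spNorm C ≤ φ)
    (γ : ℝ) (hγ : γ ∈ Set.Ioc (0 : ℝ) 1)
    (K : Matrix (Fin m) (Fin p) ℝ) (hK : inS A B C γ K) :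
    Real.sqrt γ * specRad (Acl A B C K) ≤
        Real.sqrt (1 - ℓ₀ / Jcost A B C Q R γ K) ∧
      ∀ t : ℕ, 0 < t →
        spNorm ((Real.sqrt γ • Acl A B C K) ^ t) ≤
          Real.sqrt (Jcost A B C Q R γ K / ℓ₀) *
            Real.sqrt (1 - ℓ₀ / Jcost A B C Q R γ K) ^ t :=
  stmt11_general hn A B C Q R ℓ₀ hℓ₀ hQlb hRlb γ hγ K hK
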